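/- arXiv:2111.04399 — 3 statements merged into one kernel-verified Lean document; each statement's English description precedes it below -/
import Mathlib

section
/- Let Ψ(λ) = A·Φ(λ)/((λ+μ₁)(λ+μ₁+ν₁)) + B·Φ(λ)/((λ+μ₂)(λ+μ₂+ν₂)) for complex λ, where A, B ≥ 0, μ₁, μ₂, ν₁, ν₂ > 0, and Φ satisfies |Φ(λ)| ≤ Φ(Re λ) with Φ real-valued, nonnegative, and antitone on [0,∞). If Ψ(0) < 1, then every complex root λ of Ψ(λ) = 1 satisfies Re(λ) < 0. -/
/-! For `0 ≤ Re λ` and `μ ≥ 0` we have `|λ + μ| ≥ Re λ + μ ≥ μ`, so each summand of `Ψ(λ)` is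
bounded in modulus by the corresponding summand of `Ψ(0)`, using `|Φ(λ)| ≤ Φ(Re λ) ≤ Φ(0)`.
Hence `|Ψ(λ)| ≤ Ψ(0) < 1` on the closed right half-plane, so `Ψ(λ) = 1` forces `Re λ < 0`. -/

namespace Complex

lemma le_norm_add_ofReal {z : ℂ} (hz : 0 ≤ z.re) (μ : ℝ) : μ ≤ ‖z + μ‖ :=
  calc μ ≤ (z + μ).re := by simp [hz]
    _ ≤ ‖z + μ‖ := re_le_norm _

lemma norm_mul_div_shift_mul_shift_le {z w : ℂ} {C M μ ν : ℝ} (hz : 0 ≤ z.re) (hC : 0 ≤ C)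
    (hμ : 0 < μ) (hν : 0 ≤ ν) (hw : ‖w‖ ≤ M) :
    ‖(C : ℂ) * w / ((z + μ) * (z + μ + ν))‖ ≤ C * M / (μ * (μ + ν)) := by
  have hμν : μ + ν ≤ ‖z + μ + ν‖ := by
    simpa only [ofReal_add, add_assoc] using le_norm_add_ofReal hz (μ + ν)
  rw [norm_div, norm_mul, norm_mul, norm_real, Real.norm_of_nonneg hC]
  exact div_le_div₀ (mul_nonneg hC ((norm_nonneg w).trans hw)) (by gcongr) (by positivity)
    (mul_le_mul (le_norm_add_ofReal hz μ) hμν (by positivity) (norm_nonneg _))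

end Complex

theorem stmt_11_general (A B μ₁ μ₂ ν₁ ν₂ : ℝ) (hA : 0 ≤ A) (hB : 0 ≤ B)
    (hμ₁ : 0 < μ₁) (hμ₂ : 0 < μ₂) (hν₁ : 0 < ν₁) (hν₂ : 0 < ν₂)
    (Φc : ℂ → ℂ) (Φ : ℝ → ℝ)
    (hΦanti : AntitoneOn Φ (Set.Ici 0))
    (hΦbound : ∀ z : ℂ, ‖Φc z‖ ≤ Φ z.re)
    (Ψc : ℂ → ℂ)
    (hΨc : ∀ z : ℂ, Ψc z =
      (A : ℂ) * Φc z / ((z + (μ₁ : ℂ)) * (z + (μ₁ : ℂ) + (ν₁ : ℂ))) +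
      (B : ℂ) * Φc z / ((z + (μ₂ : ℂ)) * (z + (μ₂ : ℂ) + (ν₂ : ℂ))))
    (hΨ0 : A * Φ 0 / (μ₁ * (μ₁ + ν₁)) + B * Φ 0 / (μ₂ * (μ₂ + ν₂)) < 1)
    (z : ℂ) (hroot : Ψc z = 1) :
    z.re < 0 := by
  by_contra! hz
  have hΦz : ‖Φc z‖ ≤ Φ 0 :=
    (hΦbound z).trans (hΦanti Set.self_mem_Ici hz hz)
  have hΨz : 1 ≤ A * Φ 0 / (μ₁ * (μ₁ + ν₁)) + B * Φ 0 / (μ₂ * (μ₂ + ν₂)) :=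
    calc (1 : ℝ) = ‖Ψc z‖ := by simp [hroot]
      _ ≤ _ := by
        rw [hΨc]
        exact norm_add_le_of_le
          (Complex.norm_mul_div_shift_mul_shift_le hz hA hμ₁ hν₁.le hΦz)
          (Complex.norm_mul_div_shift_mul_shift_le hz hB hμ₂ hν₂.le hΦz)
  linarith

/-- if Ψ(0) < 1, every complex root of Ψ(λ) = 1 has Re(λ) < 0. -/
theorem stmt_11 (A B μ₁ μ₂ ν₁ ν₂ : ℝ) (hA : 0 ≤ A) (hB : 0 ≤ B)
    (hμ₁ : 0 < μ₁) (hμ₂ : 0 < μ₂) (hν₁ : 0 < ν₁) (hν₂ : 0 < ν₂)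
    (Φc : ℂ → ℂ) (Φ : ℝ → ℝ)
    (hΦnonneg : ∀ l ∈ Set.Ici (0 : ℝ), 0 ≤ Φ l)
    (hΦanti : AntitoneOn Φ (Set.Ici 0))
    (hΦbound : ∀ z : ℂ, ‖Φc z‖ ≤ Φ z.re)
    (Ψc : ℂ → ℂ)
    (hΨc : ∀ z : ℂ, Ψc z =
      (A : ℂ) * Φc z / ((z + (μ₁ : ℂ)) * (z + (μ₁ : ℂ) + (ν₁ : ℂ))) +
      (B : ℂ) * Φc z / ((z + (μ₂ : ℂ)) * (z + (μ₂ : ℂ) + (ν₂ : ℂ))))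
    (hΨ0 : A * Φ 0 / (μ₁ * (μ₁ + ν₁)) + B * Φ 0 / (μ₂ * (μ₂ + ν₂)) < 1)
    (z : ℂ) (hroot : Ψc z = 1) :
    z.re < 0 :=
  stmt_11_general A B μ₁ μ₂ ν₁ ν₂ hA hB hμ₁ hμ₂ hν₁ hν₂ Φc Φ hΦanti hΦbound Ψc hΨc hΨ0 z hroot
end

section
/- If R₀ < 1, where R₀ = (p_{hf} p_{fh} h_s*(0)/H*²)·[ε α_{fw}² F_{ws}* ν_{fw}/(μ_{fw}(μ_{fw}+ν_{fw})) + α_f² F_s* ν_f/(μ_f(μ_f+ν_f))]·∫₀^∞∫₀^a α(ā) exp(-∫₀^ā μ_{hs}(η)dη - ∫_ā^a (μ_{hi}(η)+ρ_h(η))dη) dā da, then there is no endemic steady state: the system of equations H_i* = ∫₀^∞∫₀^a exp(-∫_ā^a(μ_{hi}+ρ_h)) [α_f α(ā) p_{fh} (h_s*(ā)/H*) F_i* + ε α_{fw} α(ā) p_{fh} (h_s*(ā)/H*) F_{wi}*] dā da, α_f p_{hf} F_s* H_i*/H* = (μ_f(μ_f+ν_f)/ν_f) F_i*, and α_{fw}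 p_{hf} F_{ws}* H_i*/H* = (μ_{fw}(μ_{fw}+ν_{fw})/ν_{fw}) F_{wi}*, has no solution with H_i* > 0 and F_i*, F_{wi}* ≥ 0. -/
open MeasureTheory

/-- if R₀ < 1 then there is no endemic steady state with H_i* > 0. -/
theorem stmt_12 (phf pfh αf αfw ε Fs Fws Hstar hs0 μf μfw νf νfw : ℝ)
    (hphf : 0 < phf) (hpfh : 0 < pfh) (hαf : 0 < αf) (hαfw : 0 < αfw)
    (hε : ε ∈ Set.Icc (0 : ℝ) 1) (hFs : 0 < Fs) (hFws : 0 < Fws)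
    (hHstar : 0 < Hstar) (hhs0 : 0 < hs0)
    (hμf : 0 < μf) (hμfw : 0 < μfw) (hνf : 0 < νf) (hνfw : 0 < νfw)
    (α μhs μhi ρh : ℝ → ℝ)
    (hαc : Continuous α) (hμhsc : Continuous μhs)
    (hμhic : Continuous μhi) (hρhc : Continuous ρh)
    (hαn : ∀ a ≥ (0 : ℝ), 0 ≤ α a) (hμhsn : ∀ a ≥ (0 : ℝ), 0 ≤ μhs a)
    (hμhin : ∀ a ≥ (0 : ℝ), 0 ≤ μhi a) (hρhn : ∀ a ≥ (0 : ℝ), 0 ≤ ρh a)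
    (hs : ℝ → ℝ)
    (hhs : ∀ a, hs a = hs0 * Real.exp (-∫ η in (0 : ℝ)..a, μhs η))
    (I : ℝ)
    (hI : I = ∫ a in Set.Ioi (0 : ℝ), ∫ abar in (0 : ℝ)..a,
      α abar * Real.exp (-(∫ η in (0 : ℝ)..abar, μhs η) -
        ∫ η in abar..a, μhi η + ρh η))
    (hIfin : IntegrableOn (fun a => ∫ abar in (0 : ℝ)..a,
      α abar * Real.exp (-(∫ η in (0 : ℝ)..abar, μhs η) -
        ∫ η in abar..a, μhi η + ρh η)) (Set.Ioi 0))
    (R0 : ℝ)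
    (hR0 : R0 = phf * pfh * hs0 / Hstar ^ 2 *
      (ε * αfw ^ 2 * Fws * νfw / (μfw * (μfw + νfw)) +
        αf ^ 2 * Fs * νf / (μf * (μf + νf))) * I)
    (hR0lt : R0 < 1) :
    ¬ ∃ Hi Fi Fwi : ℝ, 0 < Hi ∧ 0 ≤ Fi ∧ 0 ≤ Fwi ∧
      (Hi = ∫ a in Set.Ioi (0 : ℝ), ∫ abar in (0 : ℝ)..a,
        Real.exp (-∫ η in abar..a, μhi η + ρh η) *
          (αf * α abar * pfh * (hs abar / Hstar) * Fi +
            ε * αfw * α abar * pfh * (hs abar / Hstar) * Fwi)) ∧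
      αf * phf * Fs * (Hi / Hstar) = μf * (μf + νf) / νf * Fi ∧
      αfw * phf * Fws * (Hi / Hstar) = μfw * (μfw + νfw) / νfw * Fwi := by

  rintro ⟨Hi, Fi, Fwi, hHi, _, _, heq, hFi, hFwi⟩
  set C := pfh * hs0 / Hstar * (αf * Fi + ε * αfw * Fwi) with hC
  have hpt : ∀ a abar : ℝ,
      Real.exp (-∫ η in abar..a, μhi η + ρh η) *
        (αf * α abar * pfh * (hs abar / Hstar) * Fi +
          ε * αfw * α abar * pfh * (hs abar / Hstar) * Fwi)
      = C * (α abar * Real.exp (-(∫ η in (0:ℝ)..abar, μhs η) -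
          ∫ η in abar..a, μhi η + ρh η)) := by
    intro a abar
    rw [hhs abar, sub_eq_add_neg, Real.exp_add, hC]
    ring
  have hinner : ∀ a : ℝ,
      (∫ abar in (0:ℝ)..a, Real.exp (-∫ η in abar..a, μhi η + ρh η) *
        (αf * α abar * pfh * (hs abar / Hstar) * Fi +
          ε * αfw * α abar * pfh * (hs abar / Hstar) * Fwi))
      = C * ∫ abar in (0:ℝ)..a,
          α abar * Real.exp (-(∫ η in (0:ℝ)..abar, μhs η) -
            ∫ η in abar..a, μhi η + ρh η) := by
    intro a
    rw [← intervalIntegral.integral_const_mul]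
    exact intervalIntegral.integral_congr fun abar _ => hpt a abar
  have hHieq : Hi = C * I := by
    rw [heq, hI, ← integral_const_mul]
    exact MeasureTheory.setIntegral_congr_fun measurableSet_Ioi fun a _ => hinner a
  have hFi' : Fi = νf * αf * phf * Fs * Hi / (Hstar * (μf * (μf + νf))) := by
    field_simp at hFi ⊢
    linear_combination -hFi
  have hFwi' : Fwi = νfw * αfw * phf * Fws * Hi / (Hstar * (μfw * (μfw + νfw))) := by
    field_simp at hFwi ⊢
    linear_combination -hFwi
  have hCR : C * I = R0 * Hi := by
    rw [hC, hR0, hFi', hFwi']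
    field_simp
    ring
  rw [hCR] at hHieq
  nlinarith [hHi, hR0lt]
end

section
/- Suppose N, N̄ : [0,∞) → ℝ are continuous, f : [0,∞) → [0,∞) is continuous, g : [0,∞) → ℝ is continuous, N(t) ≤ ∫₀^t f(a) N(t-a) da + g(t) for all t ≥ 0, and N̄ satisfies the renewal equation N̄(t) = ∫₀^t f(a) N̄(t-a) da + g(t) with N̄(0) = g(0) ≥ N(0). Then N(t) ≤ N̄(t) for all t ≥ 0. -/
/-! Set `D = N - N̄`. Subtracting the renewal equation from the inequality gives
`D(t) ≤ ∫₀^t f(a) D(t-a) da`, and since `f ≥ 0` the same holds with `D⁺` on the right.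
Bounding `f ≤ K` on `[0, T]` turns this into `D⁺(t) ≤ K ∫₀^t D⁺`, so the primitive
`v(t) = ∫₀^t D⁺` satisfies `|v'| ≤ K |v|` with `v(0) = 0`; by Grönwall `v = 0`,
hence `D⁺ = 0`. -/

open Set MeasureTheory

theorem eq_zero_of_le_mul_integral {u : ℝ → ℝ} {K T : ℝ} (hu : Continuous u)
    (hu0 : ∀ t ∈ Icc 0 T, 0 ≤ u t) (hle : ∀ t ∈ Icc 0 T, u t ≤ K * ∫ s in 0..t, u s) :
    ∀ t ∈ Icc 0 T, u t = 0 := by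
  have hderiv (t : ℝ) : HasDerivAt (fun t => ∫ s in 0..t, u s) (u t) t :=
    intervalIntegral.integral_hasDerivAt_right (hu.intervalIntegrable _ _)
      (hu.stronglyMeasurableAtFilter _ _) hu.continuousAt
  have hprim : ∀ t ∈ Icc 0 T, ∫ s in 0..t, u s = 0 := by
    refine eq_zero_of_abs_deriv_le_mul_abs_self_of_eq_zero_right (K := K)
      (fun t _ => (hderiv t).continuousAt.continuousWithinAt)
      (fun t _ => (hderiv t).hasDerivWithinAt) intervalIntegral.integral_same fun t ht => ?_
    have ht' : t ∈ Icc 0 T := Ico_subset_Icc_self ht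
    have hprim0 : 0 ≤ ∫ s in 0..t, u s :=
      intervalIntegral.integral_nonneg ht'.1 fun s hs => hu0 s ⟨hs.1, hs.2.trans ht'.2⟩
    rw [Real.norm_of_nonneg (hu0 t ht'), Real.norm_of_nonneg hprim0]
    exact hle t ht'
  intro t ht
  refine le_antisymm ?_ (hu0 t ht)
  simpa [hprim t ht] using hle t ht

theorem integral_mul_comp_sub_le_mul_integral {f u : ℝ → ℝ} {K t : ℝ} (hf : Continuous f)
    (hu : Continuous u) (ht : 0 ≤ t) (hu0 : ∀ s, 0 ≤ u s) (hfK : ∀ a ∈ Icc 0 t, f a ≤ K) :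
    ∫ a in 0..t, f a * u (t - a) ≤ K * ∫ s in 0..t, u s := by
  have hut : Continuous fun a => u (t - a) := hu.comp (continuous_const.sub continuous_id)
  calc ∫ a in 0..t, f a * u (t - a)
      ≤ ∫ a in 0..t, K * u (t - a) :=
        intervalIntegral.integral_mono_on ht ((hf.mul hut).intervalIntegrable _ _)
          ((continuous_const.mul hut).intervalIntegrable _ _)
          fun a ha => mul_le_mul_of_nonneg_right (hfK a ha) (hu0 _)
    _ = K * ∫ s in 0..t, u s := by
        rw [intervalIntegral.integral_const_mul, intervalIntegral.integral_comp_sub_left,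
          sub_self, sub_zero]

theorem nonpos_of_le_integral_mul_comp_sub {D f : ℝ → ℝ} (hD : Continuous D) (hf : Continuous f)
    (hf0 : ∀ a ≥ 0, 0 ≤ f a) (hle : ∀ t ≥ 0, D t ≤ ∫ a in 0..t, f a * D (t - a)) :
    ∀ t ≥ 0, D t ≤ 0 := by
  intro T hT
  obtain ⟨K, hK⟩ := isCompact_Icc.exists_bound_of_continuousOn (hf.continuousOn (s := Icc 0 T))
  have hfK : ∀ a ∈ Icc 0 T, f a ≤ K := fun a ha => (le_abs_self _).trans (hK a ha)
  have hK0 : 0 ≤ K := (hf0 0 le_rfl).trans (hfK 0 ⟨le_rfl, hT⟩)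
  set u : ℝ → ℝ := fun t => max (D t) 0
  have hu : Continuous u := hD.max continuous_const
  have hu0 (s : ℝ) : 0 ≤ u s := le_max_right _ _
  have hDu : ∀ t ≥ 0, D t ≤ ∫ a in 0..t, f a * u (t - a) := fun t ht =>
    (hle t ht).trans <| intervalIntegral.integral_mono_on ht
      ((hf.mul (hD.comp (continuous_const.sub continuous_id))).intervalIntegrable _ _)
      ((hf.mul (hu.comp (continuous_const.sub continuous_id))).intervalIntegrable _ _)
      fun a ha => mul_le_mul_of_nonneg_left (le_max_left _ _) (hf0 a ha.1)
  have hGronwall : ∀ t ∈ Icc 0 T, u t ≤ K * ∫ s in 0..t, u s := fun t ht =>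
    max_le ((hDu t ht.1).trans <| integral_mul_comp_sub_le_mul_integral hf hu ht.1 hu0
        fun a ha => hfK a ⟨ha.1, ha.2.trans ht.2⟩)
      (mul_nonneg hK0 (intervalIntegral.integral_nonneg ht.1 fun s _ => hu0 s))
  have huT := eq_zero_of_le_mul_integral hu (fun t _ => hu0 t) hGronwall T ⟨hT, le_rfl⟩
  exact (le_max_left _ _).trans huT.le

theorem stmt_19_general (N Nbar f g : ℝ → ℝ)
    (hNc : Continuous N) (hNbarc : Continuous Nbar)
    (hfc : Continuous f)
    (hfn : ∀ a ≥ (0 : ℝ), 0 ≤ f a)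
    (hineq : ∀ t ≥ (0 : ℝ), N t ≤ (∫ a in (0 : ℝ)..t, f a * N (t - a)) + g t)
    (heq : ∀ t ≥ (0 : ℝ), Nbar t = (∫ a in (0 : ℝ)..t, f a * Nbar (t - a)) + g t) :
    ∀ t ≥ (0 : ℝ), N t ≤ Nbar t := by
  have hint {F : ℝ → ℝ} (hF : Continuous F) (t : ℝ) :
      IntervalIntegrable (fun a => f a * F (t - a)) volume 0 t :=
    (hfc.mul (hF.comp (continuous_const.sub continuous_id))).intervalIntegrable _ _
  have hdiff : ∀ t ≥ (0 : ℝ), (N - Nbar) t ≤ ∫ a in 0..t, f a * (N - Nbar) (t - a) := by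
    intro t ht
    simp only [Pi.sub_apply, mul_sub]
    rw [intervalIntegral.integral_sub (hint hNc t) (hint hNbarc t)]
    linarith [hineq t ht, heq t ht]
  exact fun t ht =>
    sub_nonpos.mp (nonpos_of_le_integral_mul_comp_sub (hNc.sub hNbarc) hfc hfn hdiff t ht)

/-- comparison principle for Volterra renewal inequalities with
nonnegative kernel. -/
theorem stmt_19 (N Nbar f g : ℝ → ℝ)
    (hNc : Continuous N) (hNbarc : Continuous Nbar)
    (hfc : Continuous f) (hgc : Continuous g)
    (hfn : ∀ a ≥ (0 : ℝ), 0 ≤ f a)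
    (hineq : ∀ t ≥ (0 : ℝ), N t ≤ (∫ a in (0 : ℝ)..t, f a * N (t - a)) + g t)
    (heq : ∀ t ≥ (0 : ℝ), Nbar t = (∫ a in (0 : ℝ)..t, f a * Nbar (t - a)) + g t)
    (hN0 : N 0 ≤ g 0) :
    ∀ t ≥ (0 : ℝ), N t ≤ Nbar t :=
  stmt_19_general N Nbar f g hNc hNbarc hfc hfn hineq heq
end
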